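/- For every non-negative integer n, the dimension over Z/2Z of the vector space RST(n) of rotationally symmetric binary Steinhaus triangles of size n equals ⌊n/3⌋ + δ_{1,(n mod 3)}. -/

import Mathlib

open Finset

namespace Steinhaus

/-- Extended binomial coefficient `C(a,b)` for integers `a`, `b`:
`C(a,0) = 1`, `C(0,b) = 0` for `b > 0`, Pascal's rule everywhere; in particular
`C(a,b) = 0` for `b < 0` and `C(a,b) = (-1)^b C(b-a-1,b)` for `a < 0 ≤ b`. -/
def ibinom (a b : ℤ) : ℤ :=
  if b < 0 then 0
  else if 0 ≤ a then (a.toNat.choose b.toNat : ℤ)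
  else (-1) ^ b.toNat * ((b - a - 1).toNat.choose b.toNat : ℤ)

/-- `(i,j)` is an index of the triangle of size `n`, i.e. `1 ≤ i ≤ j ≤ n`. -/
def InTri (n i j : ℕ) : Prop := 1 ≤ i ∧ i ≤ j ∧ j ≤ n

instance (n i j : ℕ) : Decidable (InTri n i j) :=
  inferInstanceAs (Decidable (1 ≤ i ∧ i ≤ j ∧ j ≤ n))

/-- The `ZMod 2`-vector space of binary Steinhaus triangles of size `n`,
realized as functions `ℕ → ℕ → ZMod 2` vanishing outside the triangle
`{(i,j) | 1 ≤ i ≤ j ≤ n}` and satisfying the local rule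
`a i j = a (i-1) (j-1) + a (i-1) j` inside it. -/
def ST (n : ℕ) : Submodule (ZMod 2) (ℕ → ℕ → ZMod 2) where
  carrier := {a | (∀ i j, ¬ InTri n i j → a i j = 0) ∧
    ∀ i j, 2 ≤ i → i ≤ j → j ≤ n → a i j = a (i - 1) (j - 1) + a (i - 1) j}
  add_mem' := by
    rintro a b ⟨ha0, ha1⟩ ⟨hb0, hb1⟩
    refine ⟨fun i j h => ?_, fun i j h2 hij hjn => ?_⟩
    · simp only [Pi.add_apply, ha0 i j h, hb0 i j h, add_zero]
    · simp only [Pi.add_apply, ha1 i j h2 hij hjn, hb1 i j h2 hij hjn]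
      ring
  zero_mem' := ⟨fun _ _ _ => rfl, fun _ _ _ _ _ => by simp⟩
  smul_mem' := by
    rintro c a ⟨ha0, ha1⟩
    refine ⟨fun i j h => ?_, fun i j h2 hij hjn => ?_⟩
    · simp only [Pi.smul_apply, ha0 i j h, smul_zero]
    · simp only [Pi.smul_apply, ha1 i j h2 hij hjn, smul_add]

/-- The first row of the triangle `a` (of size `n`) is the sequence `S`;
equivalently, `a = ∇S`. -/
def FirstRow (n : ℕ) (a : ℕ → ℕ → ZMod 2) (S : ℕ → ZMod 2) : Prop :=
  ∀ j, 1 ≤ j → j ≤ n → a 1 j = S j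

/-- The rotation `r` by 120 degrees: `r(a)_{i,j} = a_{j-i+1, n-i+1}`. -/
def rot (n : ℕ) (a : ℕ → ℕ → ZMod 2) : ℕ → ℕ → ZMod 2 :=
  fun i j => if InTri n i j then a (j - i + 1) (n - i + 1) else 0

/-- The horizontal reflection `h`: `h(a)_{i,j} = a_{i, n-j+i}`. -/
def hrefl (n : ℕ) (a : ℕ → ℕ → ZMod 2) : ℕ → ℕ → ZMod 2 :=
  fun i j => if InTri n i j then a i (n - j + i) else 0

lemma rot_add (n : ℕ) (a b : ℕ → ℕ → ZMod 2) :
    rot n (a + b) = rot n a + rot n b := by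
  funext i j
  simp only [rot, Pi.add_apply]
  split_ifs <;> simp

lemma rot_smul (n : ℕ) (c : ZMod 2) (a : ℕ → ℕ → ZMod 2) :
    rot n (c • a) = c • rot n a := by
  funext i j
  simp only [rot, Pi.smul_apply]
  split_ifs <;> simp

lemma hrefl_add (n : ℕ) (a b : ℕ → ℕ → ZMod 2) :
    hrefl n (a + b) = hrefl n a + hrefl n b := by
  funext i j
  simp only [hrefl, Pi.add_apply]
  split_ifs <;> simp

lemma hrefl_smul (n : ℕ) (c : ZMod 2) (a : ℕ → ℕ → ZMod 2) :
    hrefl n (c • a) = c • hrefl n a := by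
  funext i j
  simp only [hrefl, Pi.smul_apply]
  split_ifs <;> simp

/-- The linear map `ρ = r² + r + id`. -/
def rho (n : ℕ) (a : ℕ → ℕ → ZMod 2) : ℕ → ℕ → ZMod 2 :=
  rot n (rot n a) + rot n a + a

/-- The subspace of rotationally symmetric Steinhaus triangles (fixed by `r`). -/
def RST (n : ℕ) : Submodule (ZMod 2) (ℕ → ℕ → ZMod 2) where
  carrier := {a | a ∈ ST n ∧ rot n a = a}
  add_mem' := by
    rintro a b ⟨ha, ha'⟩ ⟨hb, hb'⟩
    exact ⟨add_mem ha hb, by rw [rot_add, ha', hb']⟩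
  zero_mem' := ⟨zero_mem _, by funext i j; simp [rot]⟩
  smul_mem' := by
    rintro c a ⟨ha, ha'⟩
    exact ⟨Submodule.smul_mem _ c ha, by rw [rot_smul, ha']⟩

/-- The subspace of horizontally symmetric Steinhaus triangles (fixed by `h`). -/
def HST (n : ℕ) : Submodule (ZMod 2) (ℕ → ℕ → ZMod 2) where
  carrier := {a | a ∈ ST n ∧ hrefl n a = a}
  add_mem' := by
    rintro a b ⟨ha, ha'⟩ ⟨hb, hb'⟩
    exact ⟨add_mem ha hb, by rw [hrefl_add, ha', hb']⟩
  zero_mem' := ⟨zero_mem _, by funext i j; simp [hrefl]⟩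
  smul_mem' := by
    rintro c a ⟨ha, ha'⟩
    exact ⟨Submodule.smul_mem _ c ha, by rw [hrefl_smul, ha']⟩

/-- The subspace of dihedrally symmetric Steinhaus triangles (fixed by `r` and `h`). -/
def DST (n : ℕ) : Submodule (ZMod 2) (ℕ → ℕ → ZMod 2) where
  carrier := {a | a ∈ ST n ∧ rot n a = a ∧ hrefl n a = a}
  add_mem' := by
    rintro a b ⟨ha, ha', ha''⟩ ⟨hb, hb', hb''⟩
    exact ⟨add_mem ha hb, by rw [rot_add, ha', hb'], by rw [hrefl_add, ha'', hb'']⟩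
  zero_mem' := ⟨zero_mem _, by funext i j; simp [rot], by funext i j; simp [hrefl]⟩
  smul_mem' := by
    rintro c a ⟨ha, ha', ha''⟩
    exact ⟨Submodule.smul_mem _ c ha, by rw [rot_smul, ha'],
      by rw [hrefl_smul, ha'']⟩

/-- `σ₂`: the sum of the first `n` terms of a sequence over `ZMod 2`. -/
def seqSum (n : ℕ) (S : ℕ → ZMod 2) : ZMod 2 := ∑ j ∈ Finset.Icc 1 n, S j

/-- The subspace `DST₀(n)` of dihedrally symmetric Steinhaus triangles whose
first row has zero sum. -/
def DST0 (n : ℕ) : Submodule (ZMod 2) (ℕ → ℕ → ZMod 2) where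
  carrier := {a | a ∈ DST n ∧ seqSum n (a 1) = 0}
  add_mem' := by
    rintro a b ⟨ha, ha'⟩ ⟨hb, hb'⟩
    refine ⟨add_mem ha hb, ?_⟩
    have h : seqSum n ((a + b) 1) = seqSum n (a 1) + seqSum n (b 1) := by
      simp [seqSum, Finset.sum_add_distrib]
    rw [h, ha', hb', add_zero]
  zero_mem' := ⟨zero_mem _, by simp [seqSum]⟩
  smul_mem' := by
    rintro c a ⟨ha, ha'⟩
    refine ⟨Submodule.smul_mem _ c ha, ?_⟩
    have h : seqSum n ((c • a) 1) = c • seqSum n (a 1) := by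
      simp [seqSum, smul_eq_mul, Finset.mul_sum]
    rw [h, ha', smul_zero]

/-- The derived sequence `∂S`. -/
def der (S : ℕ → ZMod 2) : ℕ → ZMod 2 := fun j => S j + S (j + 1)

/-- The antiderived sequence `∫_{i,x} S`, whose `j`-th term is
`x + Σ_{k=1}^{i-1} S k + Σ_{k=1}^{j-1} S k`. -/
def antider (i : ℕ) (x : ZMod 2) (S : ℕ → ZMod 2) : ℕ → ZMod 2 :=
  fun j => x + (∑ k ∈ Finset.Ico 1 i, S k) + (∑ k ∈ Finset.Ico 1 j, S k)

/-- A sequence of length `n` is symmetric. -/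
def SymmSeq (n : ℕ) (S : ℕ → ZMod 2) : Prop :=
  ∀ j, 1 ≤ j → j ≤ n → S (n - j + 1) = S j

/-- The binomial sequence `bs(k,l)` whose `j`-th term is `C(l+j-1, k) mod 2`. -/
def bseq (k l : ℤ) : ℕ → ZMod 2 := fun j => ((ibinom (l + (j : ℤ) - 1) k : ℤ) : ZMod 2)

/-- The map `H : ST(n) → ST(n-3)` removing the first row and the two sides. -/
def Hmap (n : ℕ) (a : ℕ → ℕ → ZMod 2) : ℕ → ℕ → ZMod 2 :=
  fun i j => if InTri (n - 3) i j then a (1 + i) (2 + j) else 0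

/-- The projection `π_G` of a subspace `V` of triangles onto coordinates in `G`. -/
def proj (V : Submodule (ZMod 2) (ℕ → ℕ → ZMod 2)) (G : Set (ℕ × ℕ)) :
    V →ₗ[ZMod 2] (G → ZMod 2) where
  toFun a := fun p => (a : ℕ → ℕ → ZMod 2) p.1.1 p.1.2
  map_add' := fun _ _ => rfl
  map_smul' := fun _ _ => rfl

/-- `G` is a generating index set of the subspace `V` of `ST(n)`:
`G` consists of triangle indices and `π_G : V → (ZMod 2)^G` is an isomorphism. -/
def IsGenIndexSet (n : ℕ) (V : Submodule (ZMod 2) (ℕ → ℕ → ZMod 2))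
    (G : Set (ℕ × ℕ)) : Prop :=
  (∀ p ∈ G, InTri n p.1 p.2) ∧ Function.Bijective (proj V G)

/-!
Removing the first row and both sides of a triangle of size `n` (the map `Hmap`) leaves a
triangle of size `n - 3`, and this commutes with the rotation `r`. On rotationally symmetric
triangles it is onto: every `b` has a preimage `a` in `ST n`, since a triangle can be built on
any first row, and `ρ a = r² a + r a + a` is a symmetric preimage because `r³ = 1` and
`ρ b = 3 b = b` over `ZMod 2`. Its kernel is the line spanned by the boundary minus the three
corners: a symmetric triangle with zero interior has a first row that is constant away from
the corners, and the corners vanish. Hence `dim RST(n) = dim RST(n - 3) + 1` for `n ≥ 3`, and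
the sizes `0, 1, 2` give dimensions `0, 1, 0`.
-/

section

variable {n : ℕ} {a b : ℕ → ℕ → ZMod 2}

theorem eq_of_mem_ST_of_firstRow (ha : a ∈ ST n) (hb : b ∈ ST n) (h : FirstRow n a (b 1)) :
    a = b := by
  funext i
  induction i with
  | zero => funext j; rw [ha.1 0 j (by simp [InTri]), hb.1 0 j (by simp [InTri])]
  | succ i ih =>
    funext j
    by_cases hij : InTri n (i + 1) j
    · rcases Nat.eq_zero_or_pos i with rfl | hi
      · exact h j hij.2.1 hij.2.2
      · rw [ha.2 (i + 1) j (by omega) hij.2.1 hij.2.2, hb.2 (i + 1) j (by omega) hij.2.1 hij.2.2,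
          Nat.add_sub_cancel, ih]
    · rw [ha.1 _ _ hij, hb.1 _ _ hij]

theorem exists_mem_ST_firstRow (n : ℕ) (S : ℕ → ZMod 2) : ∃ a ∈ ST n, FirstRow n a S := by
  induction n generalizing S with
  | zero => exact ⟨0, zero_mem _, fun j hj hj0 => by omega⟩
  | succ n ih =>
    obtain ⟨b, hb, hbS⟩ := ih (der S)
    -- `S` on top of `b`
    refine ⟨fun i j => if InTri (n + 1) i j then if i = 1 then S j else b (i - 1) (j - 1) else 0,
      ⟨fun i j hij => if_neg hij, fun i j h2 hij hjn => ?_⟩,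
      fun j hj1 hjn => by simp [InTri, hj1, hjn]⟩
    have h₁ : InTri (n + 1) i j := ⟨by omega, hij, hjn⟩
    have h₂ : InTri (n + 1) (i - 1) (j - 1) := ⟨by omega, by omega, by omega⟩
    have h₃ : InTri (n + 1) (i - 1) j := ⟨by omega, by omega, hjn⟩
    dsimp only
    rw [if_pos h₁, if_pos h₂, if_pos h₃, if_neg (by omega)]
    rcases Nat.lt_or_ge i 3 with hi | hi
    · obtain rfl : i = 2 := by omega
      show b 1 (j - 1) = S (j - 1) + S j
      rw [hbS (j - 1) (by omega) (by omega), der, Nat.sub_add_cancel (by omega)]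
    · rw [if_neg (by omega), if_neg (by omega)]
      exact hb.2 (i - 1) (j - 1) (by omega) (by omega) (by omega)

theorem rot_mem_ST (ha : a ∈ ST n) : rot n a ∈ ST n := by
  refine ⟨fun i j hij => if_neg hij, fun i j h2 hij hjn => ?_⟩
  simp only [rot]
  rw [if_pos (by unfold InTri; omega), if_pos (by unfold InTri; omega),
    if_pos (by unfold InTri; omega), show j - 1 - (i - 1) = j - i by omega,
    show n - (i - 1) + 1 = n - i + 1 + 1 by omega, show j - (i - 1) + 1 = j - i + 1 + 1 by omega]
  have h := ha.2 (j - i + 1 + 1) (n - i + 1 + 1) (by omega) (by omega) (by omega)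
  simp only [Nat.add_sub_cancel] at h
  -- the rule at `(p + 1, q)`, solved for `a p (q - 1)`
  exact (CharTwo.add_eq_iff_eq_add.mp h.symm).trans (add_comm _ _)

theorem rot_rot_rot (ha : ∀ i j, ¬ InTri n i j → a i j = 0) : rot n (rot n (rot n a)) = a := by
  funext i j
  simp only [rot]
  by_cases hij : InTri n i j
  · rw [if_pos hij]
    unfold InTri at hij
    rw [if_pos (by unfold InTri; omega), if_pos (by unfold InTri; omega)]
    congr 1 <;> omega
  · rw [if_neg hij, ha i j hij]

theorem Hmap_add (n : ℕ) (a b : ℕ → ℕ → ZMod 2) : Hmap n (a + b) = Hmap n a + Hmap n b := by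
  funext i j
  simp only [Hmap, Pi.add_apply]
  split_ifs <;> simp

theorem Hmap_smul (n : ℕ) (c : ZMod 2) (a : ℕ → ℕ → ZMod 2) : Hmap n (c • a) = c • Hmap n a := by
  funext i j
  simp only [Hmap, Pi.smul_apply]
  split_ifs <;> simp

theorem Hmap_rot (n : ℕ) (a : ℕ → ℕ → ZMod 2) : Hmap n (rot n a) = rot (n - 3) (Hmap n a) := by
  funext i j
  by_cases hij : InTri (n - 3) i j
  · unfold InTri at hij
    simp only [Hmap, rot]
    rw [if_pos (by unfold InTri; omega), if_pos (by unfold InTri; omega),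
      if_pos (by unfold InTri; omega), if_pos (by unfold InTri; omega)]
    congr 1 <;> omega
  · simp only [Hmap, rot, if_neg hij]

theorem Hmap_mem_ST (ha : a ∈ ST n) : Hmap n a ∈ ST (n - 3) := by
  refine ⟨fun i j hij => if_neg hij, fun i j h2 hij hjn => ?_⟩
  simp only [Hmap]
  rw [if_pos (by unfold InTri; omega), if_pos (by unfold InTri; omega),
    if_pos (by unfold InTri; omega), ha.2 (1 + i) (2 + j) (by omega) (by omega) (by omega)]
  congr 2 <;> omega

-- Row 2 of `a` is the derivative of its first row, so that row is a primitive of `b 1`.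
theorem exists_mem_ST_Hmap_eq (hb : b ∈ ST (n - 3)) : ∃ a ∈ ST n, Hmap n a = b := by
  obtain ⟨a, ha, haS⟩ := exists_mem_ST_firstRow n fun j => ∑ k ∈ range j, b 1 (k - 1)
  refine ⟨a, ha, eq_of_mem_ST_of_firstRow (Hmap_mem_ST ha) hb fun j hj1 hjn => ?_⟩
  simp only [Hmap]
  rw [if_pos (by unfold InTri; omega), ha.2 (1 + 1) (2 + j) le_rfl (by omega) (by omega),
    show 1 + 1 - 1 = 1 from rfl, show 2 + j - 1 = 1 + j by omega,
    haS (1 + j) (by omega) (by omega), haS (2 + j) (by omega) (by omega),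
    show 2 + j = 1 + j + 1 by omega]
  beta_reduce
  rw [sum_range_succ, Nat.add_sub_cancel_left, CharTwo.add_cancel_left]

theorem rho_mem_RST (ha : a ∈ ST n) : rho n a ∈ RST n := by
  refine ⟨add_mem (add_mem (rot_mem_ST (rot_mem_ST ha)) (rot_mem_ST ha)) ha, ?_⟩
  rw [rho, rot_add, rot_add, rot_rot_rot ha.1]
  abel

theorem Hmap_rho (n : ℕ) (a : ℕ → ℕ → ZMod 2) : Hmap n (rho n a) = rho (n - 3) (Hmap n a) := by
  simp only [rho, Hmap_add, Hmap_rot]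

theorem rho_eq_self (h : rot n a = a) : rho n a = a := by
  rw [rho, h, h, CharTwo.add_self_eq_zero, zero_add]

def HmapRST (n : ℕ) : RST n →ₗ[ZMod 2] RST (n - 3) where
  toFun a := ⟨Hmap n a, Hmap_mem_ST a.2.1, by rw [← Hmap_rot, a.2.2]⟩
  map_add' a b := Subtype.ext (Hmap_add n a b)
  map_smul' c a := Subtype.ext (Hmap_smul n c a)

theorem HmapRST_surjective (n : ℕ) : Function.Surjective (HmapRST n) := by
  rintro ⟨b, hb, hbr⟩
  obtain ⟨a, ha, rfl⟩ := exists_mem_ST_Hmap_eq hb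
  exact ⟨⟨rho n a, rho_mem_RST ha⟩, Subtype.ext (by simp [HmapRST, Hmap_rho, rho_eq_self hbr])⟩

theorem apply_eq_of_rot_eq_self (h : rot n a = a) {i j : ℕ} (hij : InTri n i j) :
    a i j = a (j - i + 1) (n - i + 1) :=
  (congrFun (congrFun h i) j).symm.trans (if_pos hij)

/-- The boundary of the triangle of size `n`, corners excluded. -/
def rim (n : ℕ) : ℕ → ℕ → ZMod 2 := fun i j =>
  if InTri n i j ∧ ((i = 1 ∧ 2 ≤ j ∧ j < n) ∨ (2 ≤ i ∧ i < n ∧ (j = i ∨ j = n))) then 1 else 0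

theorem rim_mem_RST (n : ℕ) : rim n ∈ RST n := by
  refine ⟨⟨fun i j hij => if_neg fun h => hij h.1, fun i j h2 hij hjn => ?_⟩, ?_⟩
  · simp only [rim]
    split_ifs <;> unfold InTri at * <;> first | rfl | decide | (exfalso; omega)
  · funext i j
    simp only [rot, rim]
    split_ifs <;> unfold InTri at * <;> first | rfl | (exfalso; omega)

theorem Hmap_rim (n : ℕ) : Hmap n (rim n) = 0 := by
  funext i j
  simp only [Hmap, rim, Pi.zero_apply]
  split_ifs <;> unfold InTri at * <;> first | rfl | (exfalso; omega)

theorem eq_smul_rim (hn : 3 ≤ n) (ha : a ∈ RST n) (hH : Hmap n a = 0) : a = a 1 2 • rim n := by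
  have row : ∀ j, 2 ≤ j → j < n → a 1 j = a 1 2 := by
    intro j hj hjn
    induction j, hj using Nat.le_induction with
    | base => rfl
    | succ j hj ih =>
      have h2 : a 2 (j + 1) = 0 := by
        have := congrFun (congrFun hH 1) (j - 1)
        rwa [Hmap, if_pos (by unfold InTri; omega), show 2 + (j - 1) = j + 1 by omega] at this
      rw [← ih (by omega), ← CharTwo.add_eq_zero, add_comm, ← h2,
        ha.1.2 2 (j + 1) le_rfl (by omega) hjn.le, Nat.add_sub_cancel]
  have h11 : a 1 1 = 0 := by
    have h22 := apply_eq_of_rot_eq_self ha.2 (i := 2) (j := 2) ⟨by omega, le_rfl, by omega⟩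
    rw [ha.1.2 2 2 le_rfl le_rfl (by omega), show n - 2 + 1 = n - 1 by omega,
      row (n - 1) (by omega) (by omega)] at h22
    exact (CharTwo.add_eq_iff_eq_add.mp h22).trans (CharTwo.add_self_eq_zero _)
  have h1n : a 1 n = 0 := by
    rw [← h11, apply_eq_of_rot_eq_self ha.2 (i := 1) (j := 1) ⟨le_rfl, le_rfl, by omega⟩,
      Nat.sub_add_cancel (show 1 ≤ n by omega)]
  refine eq_of_mem_ST_of_firstRow ha.1 (Submodule.smul_mem _ _ (rim_mem_RST n).1) fun j hj1 hjn => ?_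
  simp only [Pi.smul_apply, smul_eq_mul]
  rcases (show j = 1 ∨ j = n ∨ (2 ≤ j ∧ j < n) by omega) with rfl | hjn | hj
  · rw [h11, show rim n 1 1 = 0 from if_neg (by omega), mul_zero]
  · rw [hjn, h1n, show rim n 1 n = 0 from if_neg (by omega), mul_zero]
  · rw [row j hj.1 hj.2, show rim n 1 j = 1 from if_pos ⟨⟨le_rfl, hj1, hjn⟩, Or.inl ⟨rfl, hj⟩⟩,
      mul_one]

theorem ker_HmapRST (hn : 3 ≤ n) :
    LinearMap.ker (HmapRST n) = Submodule.span (ZMod 2) {⟨rim n, rim_mem_RST n⟩} := by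
  refine le_antisymm (fun a ha => ?_) ?_
  · rw [Submodule.mem_span_singleton]
    exact ⟨(a : ℕ → ℕ → ZMod 2) 1 2,
      Subtype.ext (eq_smul_rim hn a.2 (congrArg Subtype.val ha)).symm⟩
  · rw [Submodule.span_le, Set.singleton_subset_iff, SetLike.mem_coe, LinearMap.mem_ker]
    exact Subtype.ext (Hmap_rim n)

instance (n : ℕ) : FiniteDimensional (ZMod 2) (RST n) :=
  let firstRow : RST n →ₗ[ZMod 2] (Fin (n + 1) → ZMod 2) :=
    { toFun := fun a j => (a : ℕ → ℕ → ZMod 2) 1 j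
      map_add' := fun _ _ => rfl
      map_smul' := fun _ _ => rfl }
  FiniteDimensional.of_injective firstRow fun a b h => Subtype.ext <|
    eq_of_mem_ST_of_firstRow a.2.1 b.2.1 fun j _ hjn => congrFun h ⟨j, by omega⟩

theorem finrank_RST_of_three_le (hn : 3 ≤ n) :
    Module.finrank (ZMod 2) (RST n) = Module.finrank (ZMod 2) (RST (n - 3)) + 1 := by
  have hrim : rim n 1 2 = 1 := if_pos ⟨⟨le_rfl, by omega, by omega⟩, Or.inl ⟨rfl, le_rfl, by omega⟩⟩
  have hne : (⟨rim n, rim_mem_RST n⟩ : RST n) ≠ 0 := fun h => by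
    simpa [hrim] using congrFun (congrFun (congrArg Subtype.val h) 1) 2
  rw [← (HmapRST n).finrank_range_add_finrank_ker, LinearMap.range_eq_top.2 (HmapRST_surjective n),
    finrank_top, ker_HmapRST hn, finrank_span_singleton hne]

theorem RST_zero_eq_bot : RST 0 = ⊥ :=
  eq_bot_iff.2 fun a ha =>
    (Submodule.mem_bot _).2 (eq_of_mem_ST_of_firstRow ha.1 (zero_mem _) fun j hj hj0 => by omega)

theorem RST_two_eq_bot : RST 2 = ⊥ := by
  refine eq_bot_iff.2 fun a ha => (Submodule.mem_bot _).2 ?_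
  have h11 := apply_eq_of_rot_eq_self ha.2 (i := 1) (j := 1) ⟨le_rfl, le_rfl, by omega⟩
  have h12 := apply_eq_of_rot_eq_self ha.2 (i := 1) (j := 2) ⟨le_rfl, by omega, le_rfl⟩
  have h22 := ha.1.2 2 2 le_rfl le_rfl le_rfl
  simp only [Nat.reduceSub, Nat.reduceAdd] at h11 h12 h22
  have h0 : a 1 1 = 0 := by
    rw [h11, h12, h22, ← h11, CharTwo.add_self_eq_zero]
  refine eq_of_mem_ST_of_firstRow ha.1 (zero_mem _) fun j hj1 hj2 => ?_
  obtain rfl | rfl : j = 1 ∨ j = 2 := by omega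
  · exact h0
  · rw [← h11, h0]; rfl

def singleCell : ℕ → ℕ → ZMod 2 := fun i j => if InTri 1 i j then 1 else 0

theorem finrank_RST_one : Module.finrank (ZMod 2) (RST 1) = 1 := by
  have hcell : singleCell ∈ RST 1 := by
    refine ⟨⟨fun i j hij => if_neg hij, fun i j h2 hij hjn => by omega⟩, ?_⟩
    funext i j
    simp only [rot, singleCell]
    split_ifs <;> unfold InTri at * <;> first | rfl | (exfalso; omega)
  have hspan : RST 1 = Submodule.span (ZMod 2) {singleCell} := by
    refine le_antisymm (fun a ha => Submodule.mem_span_singleton.2 ⟨a 1 1, ?_⟩)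
      ((Submodule.span_le).2 (Set.singleton_subset_iff.2 hcell))
    refine eq_of_mem_ST_of_firstRow (Submodule.smul_mem _ _ hcell.1) ha.1 fun j hj1 hj => ?_
    obtain rfl : j = 1 := by omega
    simp [singleCell, InTri]
  have hne : singleCell ≠ 0 := fun h => by
    simpa [singleCell, InTri] using congrFun (congrFun h 1) 1
  rw [hspan, finrank_span_singleton hne]

end

/-- Corollary 14. `dim RST(n) = ⌊n/3⌋ + δ_{1,(n mod 3)}`. -/
theorem statement6 (n : ℕ) :
    Module.finrank (ZMod 2) (RST n) = n / 3 + (if n % 3 = 1 then 1 else 0) := by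
  induction n using Nat.strong_induction_on with
  | _ n ih =>
    rcases Nat.lt_or_ge n 3 with hn | hn
    · interval_cases n
      · simp [RST_zero_eq_bot]
      · simp [finrank_RST_one]
      · simp [RST_two_eq_bot]
    · rw [finrank_RST_of_three_le hn, ih (n - 3) (by omega), show (n - 3) % 3 = n % 3 by omega]
      split_ifs <;> omega

end Steinhaus
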